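/- arXiv:2212.13812 — 2 statements merged into one kernel-verified Lean document; each statement's English description precedes it below -/
import Mathlib

section
/- Let H be an r×n binary matrix such that every 4 distinct columns of H are linearly independent over GF(2) (equivalently, H is a parity check matrix of a code with minimum distance at least 5). Let Ĥ be the 2r×n matrix obtained by stacking H on top of its bitwise complement H̄. Then Ĥ is 4-decodable: every nonempty set of at most 4 columns of Ĥ contains a row of weight exactly one. -/
/-- `M` is `d`-decodable (rows indexed by an arbitrary type `ι`): every nonempty
set of at most `d` columns contains a row of weight exactly one. -/
def IsDecodable {ι : Type*} {n : ℕ} (M : ι → Fin n → ZMod 2) (d : ℕ) : Prop :=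
  ∀ S : Finset (Fin n), S.Nonempty → S.card ≤ d →
    ∃ i : ι, (S.filter (fun j => M i j = 1)).card = 1

/-!
A linearly independent family of columns has a nonzero sum, so for every nonempty set `T` of at
most four columns some row of `H` has odd weight on `T`. If `S` has one or four columns, taking
`T = S` gives a row of weight `1` or `3` on `S`, i.e. a weight-one row of `H` or of its
complement. If `S` has two or three columns, taking `T` to be two of them gives a row that is not
constant on `S`; its weight `w` satisfies `0 < w < |S| ≤ 3`, so `w = 1` or `|S| - w = 1`.
-/

open Finset

namespace ZMod

lemma sum_eq_card_filter_eq_one {α : Type*} (s : Finset α) (f : α → ZMod 2) :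
    ∑ j ∈ s, f j = #{j ∈ s | f j = 1} := by
  have h01 : ∀ x : ZMod 2, x = if x = 1 then 1 else 0 := by decide
  rw [← sum_boole]
  exact sum_congr rfl fun j _ => h01 (f j)

lemma card_filter_one_add_eq_one {α : Type*} (s : Finset α) (f : α → ZMod 2) :
    #{j ∈ s | 1 + f j = 1} = #s - #{j ∈ s | f j = 1} := by
  have hflip : ∀ x : ZMod 2, 1 + x = 1 ↔ ¬x = 1 := by decide
  simp only [hflip]
  have := card_filter_add_card_filter_not (s := s) (fun j => f j = 1)
  omega

lemma card_filter_eq_one_pos_lt {α : Type*} {s : Finset α} {f : α → ZMod 2} {j k : α}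
    (hj : j ∈ s) (hk : k ∈ s) (hjk : f j ≠ f k) :
    0 < #{x ∈ s | f x = 1} ∧ #{x ∈ s | f x = 1} < #s := by
  have h01 : ∀ x y : ZMod 2, x ≠ y → x = 1 ∧ y ≠ 1 ∨ x ≠ 1 ∧ y = 1 := by decide
  refine ⟨card_pos.mpr ?_, card_lt_card (filter_ssubset.mpr ?_)⟩ <;>
    rcases h01 _ _ hjk with ⟨hj1, hk1⟩ | ⟨hj1, hk1⟩
  exacts [⟨j, mem_filter.mpr ⟨hj, hj1⟩⟩, ⟨k, mem_filter.mpr ⟨hk, hk1⟩⟩, ⟨k, hk, hk1⟩, ⟨j, hj, hj1⟩]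

end ZMod

lemma LinearIndependent.sum_ne_zero {R M κ : Type*} [Ring R] [Nontrivial R] [AddCommGroup M]
    [Module R M] {v : κ → M} {T : Finset κ} (hT : T.Nonempty)
    (hv : LinearIndependent R (fun j : T => v j)) : ∑ j ∈ T, v j ≠ 0 := by
  intro hsum
  obtain ⟨j, hj⟩ := hT
  refine one_ne_zero (Fintype.linearIndependent_iff.mp hv (fun _ => 1) ?_ ⟨j, hj⟩)
  simpa only [one_smul, sum_coe_sort T v] using hsum

lemma Matrix.exists_sum_row_ne_zero {ι κ R : Type*} [Ring R] [Nontrivial R] (H : Matrix ι κ R)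
    {T : Finset κ} (hT : T.Nonempty) (hH : LinearIndependent R (fun j : T => fun i => H i j)) :
    ∃ i, ∑ j ∈ T, H i j ≠ 0 := by
  by_contra! h
  refine hH.sum_ne_zero (v := fun j i => H i j) hT (funext fun i => ?_)
  rw [Finset.sum_apply]
  exact h i

lemma exists_row_card_filter_eq_one_or_card_sub {ι κ : Type*} (H : Matrix ι κ (ZMod 2))
    (hindep : ∀ S : Finset κ, #S ≤ 4 →
      LinearIndependent (ZMod 2) (fun j : S => fun i => H i j))
    {S : Finset κ} (hS : S.Nonempty) (hS4 : #S ≤ 4) :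
    ∃ i, #{j ∈ S | H i j = 1} = 1 ∨ #S - #{j ∈ S | H i j = 1} = 1 := by
  classical
  by_cases hmid : 2 ≤ #S ∧ #S ≤ 3
  · obtain ⟨j, hj, k, hk, hjk⟩ := one_lt_card.mp hmid.1
    have hpair : #({j, k} : Finset κ) ≤ 4 := card_le_two.trans (by norm_num)
    obtain ⟨i, hi⟩ := H.exists_sum_row_ne_zero (insert_nonempty j {k}) (hindep _ hpair)
    rw [sum_pair hjk, Ne, add_eq_zero_iff_eq_neg, ZMod.neg_eq_self_mod_two] at hi
    have := ZMod.card_filter_eq_one_pos_lt hj hk hi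
    exact ⟨i, by omega⟩
  · obtain ⟨i, hi⟩ := H.exists_sum_row_ne_zero hS (hindep S hS4)
    rw [ZMod.sum_eq_card_filter_eq_one, ZMod.natCast_ne_zero_iff_odd] at hi
    obtain ⟨m, hm⟩ := hi
    have := card_filter_le S fun j => H i j = 1
    have := hS.card_pos
    exact ⟨i, by omega⟩

theorem stack_complement_four_decodable {r n : ℕ}
    (H : Matrix (Fin r) (Fin n) (ZMod 2))
    -- every set of at most 4 distinct columns of `H` is linearly independent
    (hindep : ∀ S : Finset (Fin n), S.card ≤ 4 →
      LinearIndependent (ZMod 2) (fun j : {x // x ∈ S} => fun i => H i j.val)) :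
    IsDecodable (Sum.elim (fun a j => H a j) (fun a j => 1 + H a j) :
      Fin r ⊕ Fin r → Fin n → ZMod 2) 4 := by
  intro S hS hS4
  obtain ⟨i, hi | hi⟩ := exists_row_card_filter_eq_one_or_card_sub H hindep hS hS4
  · exact ⟨Sum.inl i, hi⟩
  · exact ⟨Sum.inr i, (ZMod.card_filter_one_add_eq_one S (H i)).trans hi⟩
end

section
/- For d = 3 the recursive doubling construction gives m*(n,3) ≤ 2⌈log₂ n⌉ − 1 for all n ≥ 4: stacking an all-ones row split into two halves (row (1…1,0…0), row (0…0,1…1)) over two side-by-side copies of an optimal 3-decodable matrix on ⌈n/2⌉ columns yields a 3-decodable matrix, and iterating from the base case m*(4,3)=3 gives 2⌈log₂ n⌉ − 1 rows. -/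
/-- `M` is `d`-decodable (general row/column index types): every nonempty set
of at most `d` columns contains a row of weight exactly one. -/
def IsDecodableG {ι κ : Type*} [DecidableEq κ] (M : ι → κ → Bool) (d : ℕ) : Prop :=
  ∀ S : Finset κ, S.Nonempty → S.card ≤ d →
    ∃ i : ι, (S.filter (fun j => M i j = true)).card = 1

/-- `m*(n,d)`: the minimum number of rows of a `d`-decodable binary matrix with
`n` columns. -/
noncomputable def mStar (n d : ℕ) : ℕ :=
  sInf {m | ∃ M : Fin m → Fin n → Bool, IsDecodableG M d}

/-- Stacking the two half all-ones rows over two side-by-side copies of `M`. -/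
def doubled {m c : ℕ} (M : Fin m → Fin c → Bool) :
    Fin 2 ⊕ Fin m → Fin c ⊕ Fin c → Bool :=
  fun r j =>
    Sum.elim (fun a : Fin 2 => if a = 0 then j.isLeft else j.isRight)
      (fun i => Sum.elim (M i) (M i) j) r

/-!
A set `S` of at most three columns of the doubled matrix splits into a left part `L` and a
right part `R`. If one of them is empty, a row of the lower block isolates a column of the
other one, since `M` is 3-decodable. Otherwise `|L| + |R| ≤ 3` forces `|L| = 1` or `|R| = 1`,
and the corresponding half all-ones row has weight one on `S`. Hence doubling the number of
columns costs two rows, and starting from `m*(4,3) = 3` gives `m*(2^k,3) ≤ 2k - 1`.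
The lower bound `m*(4,3) ≥ 3` holds because the columns of a 2-decodable matrix are pairwise
distinct and nonzero, so there are fewer than `2^m` of them.
-/

namespace IsDecodableG

variable {ι ι' κ κ' : Type*} [DecidableEq κ] {M : ι → κ → Bool} {d : ℕ}

lemma comp_surjective (hM : IsDecodableG M d) {r : ι' → ι} (hr : Function.Surjective r) :
    IsDecodableG (fun i => M (r i)) d := by
  intro S hS hcard
  obtain ⟨i, hi⟩ := hM S hS hcard
  obtain ⟨i', rfl⟩ := hr i
  exact ⟨i', hi⟩

lemma comp_embedding [DecidableEq κ'] (hM : IsDecodableG M d) (e : κ' ↪ κ) :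
    IsDecodableG (fun i j => M i (e j)) d := by
  intro S hS hcard
  obtain ⟨i, hi⟩ := hM (S.map e) hS.map (by simpa using hcard)
  rw [Finset.filter_map, Finset.card_map] at hi
  exact ⟨i, hi⟩

lemma column_injective (hM : IsDecodableG M d) (hd : 2 ≤ d) :
    Function.Injective fun j i => M i j := by
  intro j j' hjj'
  by_contra hne
  obtain ⟨i, hi⟩ := hM {j, j'} (by simp) ((Finset.card_le_two).trans hd)
  have hcol : M i j = M i j' := congrFun hjj' i
  rw [Finset.filter_insert, Finset.filter_singleton, hcol] at hi
  split_ifs at hi <;> simp [Finset.card_pair hne] at hi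

lemma column_ne_zero (hM : IsDecodableG M d) (hd : 1 ≤ d) (j : κ) :
    (fun i => M i j) ≠ fun _ => false := by
  intro hj
  obtain ⟨i, hi⟩ := hM {j} (by simp) (by simpa using hd)
  simp [Finset.filter_singleton, congrFun hj i] at hi

lemma card_lt_two_pow [Fintype ι] [Fintype κ] (hM : IsDecodableG M d) (hd : 2 ≤ d) :
    Fintype.card κ < 2 ^ Fintype.card ι := by
  classical
  have hcard : Fintype.card κ < Fintype.card (ι → Bool) :=
    Fintype.card_lt_of_injective_not_surjective _ (hM.column_injective hd)
      fun hsurj => (hsurj fun _ => false).elim (hM.column_ne_zero (by omega))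
  simpa using hcard

end IsDecodableG

lemma isDecodableG_identity (n d : ℕ) :
    IsDecodableG (fun i j : Fin n => decide (i = j)) d := by
  intro S ⟨j, hj⟩ _
  exact ⟨j, by simp [Finset.filter_eq, hj]⟩

lemma Finset.card_filter_eq_card_filter_toLeft_add {κ κ' : Type*}
    (T : Finset (κ ⊕ κ')) (p : κ ⊕ κ' → Prop) [DecidablePred p] :
    (T.filter p).card =
      (T.toLeft.filter (p ∘ Sum.inl)).card + (T.toRight.filter (p ∘ Sum.inr)).card := by
  rw [← Finset.card_toLeft_add_card_toRight]
  congr 2 <;> ext <;> simp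

section Doubling

variable {m c : ℕ} (M : Fin m → Fin c → Bool) (S : Finset (Fin c ⊕ Fin c))

lemma card_filter_doubled_inl_zero :
    (S.filter fun j => doubled M (Sum.inl 0) j = true).card = S.toLeft.card := by
  simp [Finset.card_filter_eq_card_filter_toLeft_add, doubled, Function.comp_def]

lemma card_filter_doubled_inl_one :
    (S.filter fun j => doubled M (Sum.inl 1) j = true).card = S.toRight.card := by
  simp [Finset.card_filter_eq_card_filter_toLeft_add, doubled, Function.comp_def]

lemma card_filter_doubled_inr (i : Fin m) :
    (S.filter fun j => doubled M (Sum.inr i) j = true).card =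
      (S.toLeft.filter fun j => M i j = true).card +
        (S.toRight.filter fun j => M i j = true).card := by
  rw [Finset.card_filter_eq_card_filter_toLeft_add]
  rfl

variable {M} in
lemma IsDecodableG.doubled {d : ℕ} (hM : IsDecodableG M d) (hd : d ≤ 3) :
    IsDecodableG (doubled M) d := by
  intro S hS hcard
  have hsplit := S.card_toLeft_add_card_toRight
  have hpos := hS.card_pos
  by_cases hL : S.toLeft = ∅
  · obtain ⟨i, hi⟩ := hM S.toRight (Finset.card_pos.mp (by simp only [hL, Finset.card_empty] at hsplit; omega))
      (S.card_toRight_le.trans hcard)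
    exact ⟨Sum.inr i, by simp [card_filter_doubled_inr, hL, hi]⟩
  by_cases hR : S.toRight = ∅
  · obtain ⟨i, hi⟩ := hM S.toLeft (Finset.nonempty_iff_ne_empty.mpr hL)
      (S.card_toLeft_le.trans hcard)
    exact ⟨Sum.inr i, by simp [card_filter_doubled_inr, hR, hi]⟩
  have hLpos := (Finset.nonempty_iff_ne_empty.mpr hL).card_pos
  have hRpos := (Finset.nonempty_iff_ne_empty.mpr hR).card_pos
  rcases (by omega : S.toLeft.card = 1 ∨ S.toRight.card = 1) with h1 | h1
  · exact ⟨Sum.inl 0, by rw [card_filter_doubled_inl_zero, h1]⟩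
  · exact ⟨Sum.inl 1, by rw [card_filter_doubled_inl_one, h1]⟩

end Doubling

lemma mStar_le {n d m : ℕ} {M : Fin m → Fin n → Bool} (hM : IsDecodableG M d) :
    mStar n d ≤ m :=
  Nat.sInf_le ⟨M, hM⟩

lemma exists_isDecodableG_mStar (n d : ℕ) :
    ∃ M : Fin (mStar n d) → Fin n → Bool, IsDecodableG M d :=
  Nat.sInf_mem (s := {m | ∃ M : Fin m → Fin n → Bool, IsDecodableG M d})
    ⟨n, _, isDecodableG_identity n d⟩

lemma lt_two_pow_mStar {n d : ℕ} (hd : 2 ≤ d) : n < 2 ^ mStar n d := by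
  obtain ⟨M, hM⟩ := exists_isDecodableG_mStar n d
  simpa using hM.card_lt_two_pow hd

lemma mStar_mono {n n' : ℕ} (d : ℕ) (h : n ≤ n') : mStar n d ≤ mStar n' d := by
  obtain ⟨M, hM⟩ := exists_isDecodableG_mStar n' d
  exact mStar_le (hM.comp_embedding (Fin.castLEEmb h))

lemma mStar_add_self_le {d : ℕ} (hd : d ≤ 3) (c : ℕ) : mStar (c + c) d ≤ 2 + mStar c d := by
  obtain ⟨M, hM⟩ := exists_isDecodableG_mStar c d
  exact mStar_le (((hM.doubled hd).comp_surjective finSumFinEquiv.symm.surjective).comp_embedding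
    finSumFinEquiv.symm.toEmbedding)

lemma mStar_two_pow_le {d : ℕ} (hd : d ≤ 3) (h4 : mStar 4 d ≤ 3) {k : ℕ} (hk : 2 ≤ k) :
    mStar (2 ^ k) d ≤ 2 * k - 1 := by
  induction k, hk using Nat.le_induction with
  | base => simpa using h4
  | succ k hk ih =>
    have := mStar_add_self_le hd (2 ^ k)
    rw [← two_mul, ← pow_succ'] at this
    omega

theorem doubling_bound :
    (∀ c m : ℕ, ∀ M : Fin m → Fin c → Bool, IsDecodableG M 3 →
      IsDecodableG (doubled M) 3) ∧
    IsDecodableG (fun (i : Fin 3) (j : Fin 4) =>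
      decide (j.val = i.val) || decide (j.val = 3)) 3 ∧
    mStar 4 3 = 3 ∧
    (∀ n : ℕ, 4 ≤ n → mStar n 3 ≤ 2 * Nat.clog 2 n - 1) := by
  have hbase : IsDecodableG (fun (i : Fin 3) (j : Fin 4) =>
      decide (j.val = i.val) || decide (j.val = 3)) 3 := by
    unfold IsDecodableG; decide
  have h4 : mStar 4 3 = 3 := by
    have hlower : 4 < 2 ^ mStar 4 3 := lt_two_pow_mStar (by norm_num)
    have hupper : mStar 4 3 ≤ 3 := mStar_le hbase
    interval_cases mStar 4 3 <;> simp_all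
  refine ⟨fun c m M hM => hM.doubled le_rfl, hbase, h4, fun n hn => ?_⟩
  have hk : 2 ≤ Nat.clog 2 n := Nat.lt_clog_iff_pow_lt (by norm_num) |>.mpr (by omega)
  calc mStar n 3 ≤ mStar (2 ^ Nat.clog 2 n) 3 := mStar_mono 3 (Nat.le_pow_clog (by norm_num) n)
    _ ≤ 2 * Nat.clog 2 n - 1 := mStar_two_pow_le le_rfl h4.le hk
end
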